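/- Let G be a finite simple graph, let D be a nonempty dominating set of G, let U be a subset of the vertices of G, and let v be a vertex maximizing |N[v] ∩ U| over all vertices of G. Then |U \ N[v]| ≤ |U| · (1 − 1/|D|) (as real numbers). -/

import Mathlib

/-- A dominating set of a simple graph: every vertex is in `S` or adjacent to a vertex of `S`. -/
def SimpleGraph.IsDominatingSet {V : Type*} (G : SimpleGraph V) (S : Finset V) : Prop :=
  ∀ v : V, v ∈ S ∨ ∃ u ∈ S, G.Adj u v

/-!
Every vertex of `U` lies in the closed neighbourhood of some vertex of the dominating set `D`, so
`|U| ≤ ∑_{d ∈ D} |N[d] ∩ U| ≤ |D| · |N[v] ∩ U|`: the greedy vertex covers at least a `1/|D|`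
fraction of `U`.
-/

namespace SimpleGraph

variable {V : Type*} [DecidableEq V] (G : SimpleGraph V) [G.LocallyFinite]

def closedNeighborFinset (v : V) : Finset V := insert v (G.neighborFinset v)

variable {G}

theorem IsDominatingSet.exists_mem_closedNeighborFinset {D : Finset V} (hD : G.IsDominatingSet D)
    (u : V) : ∃ d ∈ D, u ∈ G.closedNeighborFinset d := by
  rcases hD u with hu | ⟨d, hd, hadj⟩
  · exact ⟨u, hu, Finset.mem_insert_self _ _⟩
  · exact ⟨d, hd, Finset.mem_insert_of_mem ((G.mem_neighborFinset d u).2 hadj)⟩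

theorem IsDominatingSet.card_le_sum_card_closedNeighborFinset_inter {D : Finset V}
    (hD : G.IsDominatingSet D) (U : Finset V) :
    U.card ≤ ∑ d ∈ D, (G.closedNeighborFinset d ∩ U).card := by
  have hcover : U ⊆ D.biUnion fun d => G.closedNeighborFinset d ∩ U := fun u hu => by
    obtain ⟨d, hd, hud⟩ := hD.exists_mem_closedNeighborFinset u
    exact Finset.mem_biUnion.2 ⟨d, hd, Finset.mem_inter.2 ⟨hud, hu⟩⟩
  exact (Finset.card_le_card hcover).trans Finset.card_biUnion_le

theorem IsDominatingSet.card_le_card_mul_card_closedNeighborFinset_inter {D : Finset V}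
    (hD : G.IsDominatingSet D) {U : Finset V} {v : V}
    (hmax : ∀ w, (G.closedNeighborFinset w ∩ U).card ≤ (G.closedNeighborFinset v ∩ U).card) :
    U.card ≤ D.card * (G.closedNeighborFinset v ∩ U).card :=
  calc U.card ≤ ∑ d ∈ D, (G.closedNeighborFinset d ∩ U).card :=
        hD.card_le_sum_card_closedNeighborFinset_inter U
    _ ≤ ∑ _d ∈ D, (G.closedNeighborFinset v ∩ U).card := Finset.sum_le_sum fun d _ => hmax d
    _ = D.card * (G.closedNeighborFinset v ∩ U).card := by rw [Finset.sum_const, smul_eq_mul]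

end SimpleGraph

theorem Finset.card_sdiff_le_mul_one_sub_inv {α : Type*} [DecidableEq α] {U N : Finset α} {k : ℕ}
    (hk : 0 < k) (h : U.card ≤ k * (N ∩ U).card) :
    ((U \ N).card : ℝ) ≤ U.card * (1 - 1 / k) := by
  have hsplit : ((U \ N).card : ℝ) + (N ∩ U).card = U.card := by
    rw [Finset.inter_comm]; exact_mod_cast Finset.card_sdiff_add_card_inter U N
  have hk' : (0 : ℝ) < k := by exact_mod_cast hk
  have hfrac : (U.card : ℝ) / k ≤ (N ∩ U).card := by
    rw [div_le_iff₀ hk', mul_comm]; exact_mod_cast h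
  rw [mul_sub, mul_one, mul_one_div]
  linarith

/-- One-step progress bound for the greedy algorithm: if `v` maximizes the span `|N[v] ∩ U|`,
then the uncovered set shrinks by a factor `(1 − 1/|D|)` for any nonempty dominating set `D`. -/
theorem greedy_step_uncovered_le
    {V : Type*} [Fintype V] [DecidableEq V] (G : SimpleGraph V) [DecidableRel G.Adj]
    (D : Finset V) (hD : G.IsDominatingSet D) (hDne : D.Nonempty)
    (U : Finset V) (v : V)
    (hmax : ∀ w : V, (((insert w (G.neighborFinset w)) ∩ U).card : ℕ) ≤
      ((insert v (G.neighborFinset v)) ∩ U).card) :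
    ((U \ (insert v (G.neighborFinset v))).card : ℝ) ≤
      (U.card : ℝ) * (1 - 1 / (D.card : ℝ)) :=
  Finset.card_sdiff_le_mul_one_sub_inv hDne.card_pos
    (hD.card_le_card_mul_card_closedNeighborFinset_inter hmax)
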